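/- arXiv:2007.12527 — 3 statements merged into one kernel-verified Lean document; each statement's English description precedes it below -/
import Mathlib

section
/- The class of uniform oriented matroids is closed under contraction of Θ-classes of the tope graph: if G is the tope graph of a UOM and E_i a Θ-class, then π_i(G) is the tope graph of a UOM. -/
open Finset
open scoped Classical

variable {U : Type*}

/-- Hamming distance between two vertices of the hypercube `U → Bool`. -/
def hDist [Fintype U] [DecidableEq U] (x y : U → Bool) : ℕ :=
  (Finset.univ.filter fun i => x i ≠ y i).card

/-- The hypercube graph on `U → Bool`: two vertices are adjacent iff they differ
in exactly one coordinate. -/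
def cubeGraph (U : Type*) [Fintype U] [DecidableEq U] : SimpleGraph (U → Bool) where
  Adj x y := hDist x y = 1
  symm := by
    constructor
    intro x y h
    have hs : (Finset.univ.filter fun i => y i ≠ x i) =
        (Finset.univ.filter fun i => x i ≠ y i) := by
      apply Finset.filter_congr
      intro i _
      exact ne_comm
    simpa [hDist, hs] using h
  loopless := by
    constructor
    intro x h
    simp [hDist] at h

/-- Distance between `x` and `y` inside the subgraph of the hypercube induced by `A`
(`0` if one of them is not in `A`). -/
noncomputable def dIn [Fintype U] [DecidableEq U] (A : Set (U → Bool)) (x y : U → Bool) : ℕ :=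
  if h : x ∈ A ∧ y ∈ A then ((cubeGraph U).induce A).dist ⟨x, h.1⟩ ⟨y, h.2⟩ else 0

/-- A set of vertices of the hypercube is a partial cube if its induced graph is connected
and the induced graph distance coincides with the Hamming distance
(i.e. it is an isometric subgraph of the hypercube). -/
def IsPartialCube [Fintype U] [DecidableEq U] (A : Set (U → Bool)) : Prop :=
  ((cubeGraph U).induce A).Connected ∧ ∀ x ∈ A, ∀ y ∈ A, dIn A x y = hDist x y

/-- `A` shatters the coordinate set `X`. -/
def Shatters [Fintype U] [DecidableEq U] (A : Set (U → Bool)) (X : Finset U) : Prop :=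
  ∀ g : U → Bool, ∃ a ∈ A, ∀ i ∈ X, a i = g i

/-- `A` strongly shatters `X`: it contains a full subcube over the coordinates `X`. -/
def StronglyShatters [Fintype U] [DecidableEq U] (A : Set (U → Bool)) (X : Finset U) : Prop :=
  ∃ a : U → Bool, ∀ g : U → Bool, (fun i => if i ∈ X then g i else a i) ∈ A

/-- An ample set family: every shattered set is strongly shattered. -/
def IsAmple [Fintype U] [DecidableEq U] (A : Set (U → Bool)) : Prop :=
  ∀ X : Finset U, Shatters A X → StronglyShatters A X

/-- Composition of sign vectors: `(X ∘ Y) e = X e` if `X e ≠ 0`, else `Y e`. -/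
def comp (X Y : U → SignType) : U → SignType := fun e => if X e = 0 then Y e else X e

/-- The support of a sign vector. -/
def supp (X : U → SignType) : Set U := {e | X e ≠ 0}

/-- The separator of two sign vectors. -/
def sep [Fintype U] [DecidableEq U] (X Y : U → SignType) : Finset U :=
  Finset.univ.filter fun e => X e * Y e = -1

/-- A complex of oriented matroids: face symmetry and strong elimination. -/
structure IsCOM (L : Set (U → SignType)) : Prop where
  fs : ∀ X ∈ L, ∀ Y ∈ L, comp X (-Y) ∈ L
  se : ∀ X ∈ L, ∀ Y ∈ L, ∀ e : U, X e * Y e = -1 →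
      ∃ Z ∈ L, Z e = 0 ∧ ∀ f : U, X f * Y f ≠ -1 → Z f = comp X Y f

/-- An oriented matroid: composition, strong elimination and symmetry. -/
structure IsOM (L : Set (U → SignType)) : Prop where
  c : ∀ X ∈ L, ∀ Y ∈ L, comp X Y ∈ L
  se : ∀ X ∈ L, ∀ Y ∈ L, ∀ e : U, X e * Y e = -1 →
      ∃ Z ∈ L, Z e = 0 ∧ ∀ f : U, X f * Y f ≠ -1 → Z f = comp X Y f
  sym : ∀ X ∈ L, -X ∈ L

/-- A simple system of sign vectors. -/
def SimpleSV (L : Set (U → SignType)) : Prop :=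
  (∀ e : U, ∀ s : SignType, ∃ X ∈ L, X e = s) ∧
  ∀ e f : U, e ≠ f → (∃ X ∈ L, X e * X f = 1) ∧ (∃ Y ∈ L, Y e * Y f = -1)

/-- The topes of a system of sign vectors: the covectors with full support. -/
def Topes (L : Set (U → SignType)) : Set (U → SignType) := {X ∈ L | ∀ e, X e ≠ 0}

/-- Conversion of a (full support) sign vector to a vertex of the hypercube. -/
def tb (X : U → SignType) : U → Bool := fun e => decide (X e = 1)

/-- The vertex set of the tope graph inside the hypercube. -/
def TopeSet (L : Set (U → SignType)) : Set (U → Bool) := tb '' Topes L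

/-- The face of a covector `X`. -/
def face (L : Set (U → SignType)) (X : U → SignType) : Set (U → SignType) :=
  {Z | ∃ Y ∈ L, Z = comp X Y}

/-!
Contracting the Θ-class `E_e` of the tope graph is deleting the element `e`: restrict every
covector to the coordinates `≠ e`. The oriented-matroid axioms are coordinatewise, so they
survive restriction. A restricted covector of full support becomes a tope after composing it
with any tope, so the restricted topes are exactly the restrictions of topes. Halfspaces of the
restriction are restrictions of halfspaces, and these stay ample because a full subcube over
`φ '' X` restricts to a full subcube over `X`.
-/

variable {V : Type*}

theorem IsOM.image_comp {L : Set (U → SignType)} (hL : IsOM L) (φ : V → U) :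
    IsOM ((· ∘ φ) '' L) where
  c := by
    rintro _ ⟨X, hX, rfl⟩ _ ⟨Y, hY, rfl⟩
    exact ⟨comp X Y, hL.c X hX Y hY, rfl⟩
  se := by
    rintro _ ⟨X, hX, rfl⟩ _ ⟨Y, hY, rfl⟩ f hf
    obtain ⟨Z, hZ, hZf, hZcomp⟩ := hL.se X hX Y hY (φ f) hf
    exact ⟨Z ∘ φ, ⟨Z, hZ, rfl⟩, hZf, fun g hg => hZcomp (φ g) hg⟩
  sym := by
    rintro _ ⟨X, hX, rfl⟩
    exact ⟨-X, hL.sym X hX, rfl⟩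

theorem IsOM.comp_mem_topes {L : Set (U → SignType)} (hL : IsOM L) {X T : U → SignType}
    (hX : X ∈ L) (hT : T ∈ Topes L) : comp X T ∈ Topes L := by
  refine ⟨hL.c X hX T hT.1, fun i => ?_⟩
  unfold comp
  split_ifs with hXi
  exacts [hT.2 i, hXi]

theorem topeSet_image_comp {L : Set (U → SignType)} (hL : IsOM L) {T : U → SignType}
    (hT : T ∈ Topes L) (φ : V → U) :
    TopeSet ((· ∘ φ) '' L) = (· ∘ φ) '' TopeSet L := by
  ext f
  constructor
  · rintro ⟨_, ⟨⟨X, hX, rfl⟩, hXfull⟩, rfl⟩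
    refine ⟨tb (comp X T), ⟨comp X T, hL.comp_mem_topes hX hT, rfl⟩, ?_⟩
    funext v
    have hXv : X (φ v) ≠ 0 := hXfull v
    simp only [Function.comp_apply, tb, comp, if_neg hXv]
  · rintro ⟨_, ⟨S, hS, rfl⟩, rfl⟩
    exact ⟨S ∘ φ, ⟨⟨S, hS.1, rfl⟩, fun v => hS.2 (φ v)⟩, rfl⟩

theorem IsAmple.image_comp [Fintype U] [DecidableEq U] [Fintype V] [DecidableEq V]
    {A : Set (U → Bool)} (hA : IsAmple A) {φ : V → U} (hφ : φ.Injective) :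
    IsAmple ((· ∘ φ) '' A) := by
  intro X hX
  have hshatters : Shatters A (X.map ⟨φ, hφ⟩) := by
    intro g
    obtain ⟨_, ⟨a, ha, rfl⟩, hag⟩ := hX (g ∘ φ)
    refine ⟨a, ha, fun i hi => ?_⟩
    obtain ⟨v, hv, rfl⟩ := Finset.mem_map.1 hi
    exact hag v hv
  obtain ⟨a, ha⟩ := hA _ hshatters
  refine ⟨a ∘ φ, fun g => ⟨_, ha (Function.extend φ g a), ?_⟩⟩
  funext v
  have hmem : φ v ∈ X.map ⟨φ, hφ⟩ ↔ v ∈ X := Finset.mem_map' _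
  simp only [Function.comp_apply, hmem, hφ.extend_apply]

theorem stmt16_general [Fintype U] [DecidableEq U] (L : Set (U → SignType)) (e : U)
    (hom : IsOM L)
    (huom : ∀ (i : U) (b : Bool), IsAmple (TopeSet L ∩ {f | f i = b}))
    (hclass : (∃ f ∈ TopeSet L, f e = true) ∧ (∃ f ∈ TopeSet L, f e = false)) :
    ∃ L' : Set ({i : U // i ≠ e} → SignType), IsOM L' ∧
      TopeSet L' = (fun (f : U → Bool) (i : {i : U // i ≠ e}) => f i.1) '' TopeSet L ∧
      ∀ (i : {i : U // i ≠ e}) (b : Bool), IsAmple (TopeSet L' ∩ {f | f i = b}) := by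
  obtain ⟨⟨_, ⟨T, hT, -⟩, -⟩, -⟩ := hclass
  have htopes := topeSet_image_comp hom hT (Subtype.val : {i : U // i ≠ e} → U)
  refine ⟨(· ∘ Subtype.val) '' L, hom.image_comp _, htopes, fun i b => ?_⟩
  rw [htopes, ← Set.image_inter_preimage]
  exact (huom i.1 b).image_comp Subtype.val_injective

/-- The class of uniform oriented matroids (per the given context: oriented
matroids in which all halfspaces of the tope graph are ample partial cubes) is closed under
contraction of Θ-classes of the tope graph: contracting the Θ-class of the coordinate `e`
(restricting all topes to the coordinates `≠ e`) yields the tope graph of a UOM. -/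
theorem stmt16 [Fintype U] [DecidableEq U] (L : Set (U → SignType)) (e : U)
    (hom : IsOM L) (hsimple : SimpleSV L)
    (huom : ∀ (i : U) (b : Bool), IsAmple (TopeSet L ∩ {f | f i = b}))
    (hclass : (∃ f ∈ TopeSet L, f e = true) ∧ (∃ f ∈ TopeSet L, f e = false)) :
    ∃ L' : Set ({i : U // i ≠ e} → SignType), IsOM L' ∧
      TopeSet L' = (fun (f : U → Bool) (i : {i : U // i ≠ e}) => f i.1) '' TopeSet L ∧
      ∀ (i : {i : U // i ≠ e}) (b : Bool), IsAmple (TopeSet L' ∩ {f | f i = b}) :=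
  stmt16_general L e hom huom hclass
end

section
/- Let G be a subgraph of the hypercube Q_m which is an isometric subgraph of Q_m and admits an isometric cover (G₁, G₀, G₂) where G₁, G₂, and G₀ = G₁ ∩ G₂ are ample partial cubes with G₀ ≠ G₁, G₂. Then G is ample. -/
open Finset
open scoped Classical

variable {U : Type*}

/-!
Every `X` shattered by `G = G1 ∪ G2` is already shattered by `G1` or by `G2`, which, being ample,
then contains an `X`-cube. Otherwise, on the coordinates `X`, the complement of the trace of
`G1 ∩ G2` is ample (traces and complements of ample families are ample), hence connected, so a
path in it from a pattern missed by `G1` to one missed by `G2` has an edge `uv` with `u` realised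
only in `G2` and `v` only in `G1`. Since `G1` and `G2` cover the edges of `G`, a geodesic of `G`
between realisers of `v` and `u` meets `G1 ∩ G2` in a vertex between them, whose trace is `u` or
`v`: a contradiction. Ample families are connected because `#A ≤ #(stronglyShattered A)` (Pajor)
passes to both fibers of `A` in any direction, by the dual Pajor inequality.
-/

section Hamming
variable [Fintype U] [DecidableEq U]

lemma hDist_eq_hammingDist (x y : U → Bool) : hDist x y = hammingDist x y := rfl

lemma eq_of_hDist_add_hDist_eq {x y z : U → Bool} (h : hDist x y + hDist y z = hDist x z)
    {j : U} (hj : x j = z j) : y j = x j := by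
  by_contra hne
  have hmem : j ∈ (({i | x i ≠ y i} : Finset U) ∪ ({i | y i ≠ z i} : Finset U)) := by
    simp only [mem_union, mem_filter, mem_univ, true_and]
    exact Or.inl (Ne.symm hne)
  have hsub : ({i | x i ≠ z i} : Finset U) ⊆
      (({i | x i ≠ y i} : Finset U) ∪ ({i | y i ≠ z i} : Finset U)).erase j := by
    intro i
    simp only [mem_erase, mem_union, mem_filter, mem_univ, true_and]
    intro hi
    exact ⟨by rintro rfl; exact hi hj, by by_contra! h'; exact hi (h'.1.trans h'.2)⟩
  have hle := card_le_card hsub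
  rw [card_erase_of_mem hmem] at hle
  have := card_union_le ({i | x i ≠ y i} : Finset U) {i | y i ≠ z i}
  have := card_pos.2 ⟨j, hmem⟩
  unfold hDist at h
  omega

lemma eq_or_eq_of_hDist_eq_one {u v w : U → Bool} (huv : hDist u v = 1)
    (hw : ∀ j, u j = v j → w j = u j) : w = u ∨ w = v := by
  obtain ⟨i, hi⟩ := card_eq_one.1 huv
  have hagree : ∀ j ≠ i, u j = v j := fun j hj => by
    by_contra hne
    exact hj (mem_singleton.1 (hi ▸ mem_filter.2 ⟨mem_univ j, hne⟩))
  by_cases hwi : w i = u i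
  · left
    funext j
    by_cases hj : j = i
    · rwa [hj]
    · exact hw j (hagree j hj)
  · right
    funext j
    by_cases hj : j = i
    · subst hj
      have hne : j ∈ ({i | u i ≠ v i} : Finset U) := hi ▸ mem_singleton_self j
      simp only [mem_filter, mem_univ, true_and] at hne
      exact (Bool.eq_not_of_ne hwi).trans (Bool.eq_not_of_ne hne.symm).symm
    · rw [hw j (hagree j hj), hagree j hj]

lemma hDist_update_update {x y : U → Bool} {i : U} (h : x i = y i) (b : Bool) :
    hDist (Function.update x i b) (Function.update y i b) = hDist x y := by
  unfold hDist
  congr 1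
  apply filter_congr
  intro j _
  by_cases hj : j = i
  · subst hj; simp [h]
  · simp [Function.update_of_ne hj]

lemma hDist_update_of_ne {x : U → Bool} {i : U} {b : Bool} (h : x i ≠ b) :
    hDist x (Function.update x i b) = 1 := by
  refine card_eq_one.2 ⟨i, ?_⟩
  ext j
  by_cases hj : j = i
  · subst hj; simp [h]
  · simp [hj]

end Hamming

section Geodesic
variable [Fintype U] [DecidableEq U] {G G1 G2 : Set (U → Bool)}

lemma hDist_le_length {a b : G} (p : ((cubeGraph U).induce G).Walk a b) :
    hDist a.1 b.1 ≤ p.length := by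
  induction p with
  | nil => simp [hDist_eq_hammingDist]
  | @cons a b c hab q ih =>
    have hab : hDist a.1 b.1 = 1 := hab
    rw [SimpleGraph.Walk.length_cons]
    calc hDist a.1 c.1 ≤ hDist a.1 b.1 + hDist b.1 c.1 := hammingDist_triangle _ _ _
      _ ≤ q.length + 1 := by omega

lemma exists_mem_inter_of_length_eq_hDist
    (hedge : ∀ x ∈ G, ∀ y ∈ G, hDist x y = 1 → (x ∈ G1 ∧ y ∈ G1) ∨ (x ∈ G2 ∧ y ∈ G2))
    {a b : G} (p : ((cubeGraph U).induce G).Walk a b) (hp : p.length = hDist a.1 b.1)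
    (ha : a.1 ∈ G1) (hb : b.1 ∉ G1) :
    ∃ w ∈ G1 ∩ G2, ∀ j, a.1 j = b.1 j → w j = a.1 j := by
  induction p with
  | nil => exact absurd ha hb
  | @cons a c b hac q ih =>
    have hac : hDist a.1 c.1 = 1 := hac
    have hq := hDist_le_length q
    have htri : hDist a.1 b.1 ≤ hDist a.1 c.1 + hDist c.1 b.1 := hammingDist_triangle _ _ _
    rw [SimpleGraph.Walk.length_cons] at hp
    have hgeo : hDist a.1 c.1 + hDist c.1 b.1 = hDist a.1 b.1 := by omega
    by_cases hc : c.1 ∈ G1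
    · obtain ⟨w, hw, hwc⟩ := ih (by omega) hc hb
      refine ⟨w, hw, fun j hj => ?_⟩
      have hcj := eq_of_hDist_add_hDist_eq hgeo hj
      rw [hwc j (hcj.trans hj), hcj]
    · rcases hedge a.1 a.2 c.1 c.2 hac with h | h
      · exact absurd h.2 hc
      · exact ⟨a.1, ⟨ha, h.1⟩, fun _ _ => rfl⟩

theorem IsPartialCube.exists_mem_inter_between (hG : IsPartialCube (G1 ∪ G2))
    (hedge : ∀ x ∈ G1 ∪ G2, ∀ y ∈ G1 ∪ G2, hDist x y = 1 →
      (x ∈ G1 ∧ y ∈ G1) ∨ (x ∈ G2 ∧ y ∈ G2))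
    {a b : U → Bool} (ha : a ∈ G1) (hb : b ∈ G2) :
    ∃ w ∈ G1 ∩ G2, ∀ j, a j = b j → w j = a j := by
  by_cases hb1 : b ∈ G1
  · exact ⟨b, ⟨hb1, hb⟩, fun j hj => hj.symm⟩
  have haG : a ∈ G1 ∪ G2 := Or.inl ha
  have hbG : b ∈ G1 ∪ G2 := Or.inr hb
  obtain ⟨p, hp⟩ := hG.1.exists_walk_length_eq_dist ⟨a, haG⟩ ⟨b, hbG⟩
  have hdist := hG.2 a haG b hbG
  rw [dIn, dif_pos ⟨haG, hbG⟩] at hdist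
  exact exists_mem_inter_of_length_eq_hDist hedge p (hp.trans hdist) ha hb1

end Geodesic

section Shattering
variable [Fintype U] [DecidableEq U] {A B : Set (U → Bool)} {X : Finset U}

lemma stronglyShatters_iff_piecewise :
    StronglyShatters A X ↔ ∃ a, ∀ g, X.piecewise g a ∈ A := Iff.rfl

lemma StronglyShatters.mono (hAB : A ⊆ B) (h : StronglyShatters A X) :
    StronglyShatters B X :=
  let ⟨a, ha⟩ := h
  ⟨a, fun g => hAB (ha g)⟩

lemma shatters_iff_image_restrict : Shatters A X ↔ X.restrict '' A = Set.univ := by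
  rw [Set.eq_univ_iff_forall]
  constructor
  · intro h p
    obtain ⟨a, ha, hap⟩ := h fun j => if hj : j ∈ X then p ⟨j, hj⟩ else false
    refine ⟨a, ha, funext fun i => ?_⟩
    simpa using hap i i.2
  · intro h g
    obtain ⟨a, ha, hag⟩ := h (X.restrict g)
    exact ⟨a, ha, fun i hi => congrFun hag ⟨i, hi⟩⟩

theorem IsAmple.image_restrict (hA : IsAmple A) (X : Finset U) :
    IsAmple (X.restrict '' A) := by
  intro Y hY
  have hYA : Shatters A (Y.map (Function.Embedding.subtype _)) := by
    intro g
    obtain ⟨_, ⟨a, ha, rfl⟩, hag⟩ := hY (X.restrict g)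
    refine ⟨a, ha, fun i hi => ?_⟩
    obtain ⟨i, hiY, rfl⟩ := mem_map.1 hi
    exact hag i hiY
  obtain ⟨a, ha⟩ := hA _ hYA
  refine ⟨X.restrict a, fun g => ⟨_, ha fun j => if hj : j ∈ X then g ⟨j, hj⟩ else false, ?_⟩⟩
  funext i
  by_cases hi : i ∈ Y <;> simp [Finset.restrict, hi]

lemma shatters_compl_iff : Shatters Aᶜ X ↔ ¬ StronglyShatters A Xᶜ := by
  rw [stronglyShatters_iff_piecewise]
  push Not
  constructor
  · intro h a
    obtain ⟨b, hb, hba⟩ := h a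
    refine ⟨b, ?_⟩
    convert hb using 2
    funext i
    by_cases hi : i ∈ X <;> simp [hi, hba]
  · intro h g
    obtain ⟨g', hg'⟩ := h g
    exact ⟨_, hg', fun i hi => by simp [hi]⟩

lemma stronglyShatters_compl_iff : StronglyShatters Aᶜ X ↔ ¬ Shatters A Xᶜ := by
  rw [stronglyShatters_iff_piecewise, _root_.Shatters]
  push Not
  constructor
  · rintro ⟨a, ha⟩
    refine ⟨a, fun b hb => ?_⟩
    by_contra! hba
    apply ha b
    convert hb using 1
    funext i
    by_cases hi : i ∈ X <;> simp [hi, hba]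
  · rintro ⟨a, ha⟩
    refine ⟨a, fun g hg => ?_⟩
    obtain ⟨i, hi, hne⟩ := ha _ hg
    rw [mem_compl] at hi
    simp [hi] at hne

theorem IsAmple.compl (hA : IsAmple A) : IsAmple Aᶜ := fun _ hX =>
  stronglyShatters_compl_iff.2 fun h => shatters_compl_iff.1 hX (hA _ h)

end Shattering

section Counting
variable [Fintype U] [DecidableEq U]

noncomputable def shattered (A : Finset (U → Bool)) : Finset (Finset U) :=
  {X | Shatters (A : Set (U → Bool)) X}

noncomputable def stronglyShattered (A : Finset (U → Bool)) : Finset (Finset U) :=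
  {X | StronglyShatters (A : Set (U → Bool)) X}

@[simp] lemma mem_shattered {A : Finset (U → Bool)} {X : Finset U} :
    X ∈ shattered A ↔ Shatters (A : Set (U → Bool)) X := by
  simp [shattered]

@[simp] lemma mem_stronglyShattered {A : Finset (U → Bool)} {X : Finset U} :
    X ∈ stronglyShattered A ↔ StronglyShatters (A : Set (U → Bool)) X := by
  simp [stronglyShattered]

lemma stronglyShattered_mono {A B : Finset (U → Bool)} (hAB : A ⊆ B) :
    stronglyShattered A ⊆ stronglyShattered B := fun _ hX =>
  mem_stronglyShattered.2 ((mem_stronglyShattered.1 hX).mono (coe_subset.2 hAB))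

lemma shatters_iff_shatters_image {A : Finset (U → Bool)} {X : Finset U} :
    Shatters (A : Set (U → Bool)) X ↔ (A.image fun a => ({i | a i} : Finset U)).Shatters X := by
  constructor
  · intro h t ht
    obtain ⟨a, ha, hat⟩ := h fun i => decide (i ∈ t)
    refine ⟨_, mem_image_of_mem _ ha, ?_⟩
    ext i
    by_cases hi : i ∈ X
    · simp [hi, hat i hi]
    · simp only [mem_inter, hi, false_and, false_iff]
      exact fun hit => hi (ht hit)
  · intro h g
    obtain ⟨u, hu, hat⟩ := h (filter_subset (fun i => g i) X)
    obtain ⟨a, ha, rfl⟩ := mem_image.1 hu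
    refine ⟨a, ha, fun i hi => ?_⟩
    have := congrArg (i ∈ ·) hat
    simp only [mem_inter, mem_filter, hi, true_and] at this
    exact Bool.eq_iff_iff.2 (by simpa using this)

/-- Pajor's lemma. -/
theorem card_le_card_shattered (A : Finset (U → Bool)) : #A ≤ #(shattered A) := by
  have hinj : Function.Injective fun a : U → Bool => ({i | a i} : Finset U) := by
    intro a b hab
    funext i
    simpa using congrArg (i ∈ ·) hab
  have hsh : shattered A = (A.image fun a => ({i | a i} : Finset U)).shatterer := by
    ext X
    simp [shatters_iff_shatters_image]
  rw [hsh, ← card_image_of_injective A hinj]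
  exact card_le_card_shatterer _

/-- The dual Pajor inequality, obtained from Pajor's lemma for the complement: `A` strongly
shatters `X` exactly when `Aᶜ` does not shatter `Xᶜ`. -/
theorem card_stronglyShattered_le (A : Finset (U → Bool)) : #(stronglyShattered A) ≤ #A := by
  have hdual : stronglyShattered A = (shattered Aᶜ)ᶜ.image compl := by
    ext X
    simp only [mem_stronglyShattered, mem_image, mem_compl, mem_shattered, coe_compl,
      shatters_compl_iff, not_not]
    exact ⟨fun h => ⟨Xᶜ, by rwa [compl_compl], compl_compl X⟩, by rintro ⟨Y, hY, rfl⟩; exact hY⟩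
  have hpajor := card_le_card_shattered Aᶜ
  have hA := card_le_univ A
  rw [card_compl, Fintype.card_fun, Fintype.card_bool] at hpajor
  rw [Fintype.card_fun, Fintype.card_bool] at hA
  rw [hdual, card_image_of_injective _ compl_injective, card_compl, Fintype.card_finset]
  omega

theorem IsAmple.card_le_card_stronglyShattered {A : Finset (U → Bool)}
    (hA : IsAmple (A : Set (U → Bool))) : #A ≤ #(stronglyShattered A) :=
  (card_le_card_shattered A).trans <| card_le_card fun X hX =>
    mem_stronglyShattered.2 (hA X (mem_shattered.1 hX))

end Counting

section Fibers
variable [Fintype U] [DecidableEq U] {A : Finset (U → Bool)} {i : U} {X : Finset U}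

open Function

/-- Both fibers are moved into the facet `x i = false`, so that they can be intersected. -/
noncomputable def fiber (A : Finset (U → Bool)) (i : U) (b : Bool) : Finset (U → Bool) :=
  {a ∈ A | a i = b}.image (update · i false)

lemma mem_fiber {b : Bool} {x : U → Bool} : x ∈ fiber A i b ↔ x i = false ∧ update x i b ∈ A := by
  simp only [fiber, mem_image, mem_filter]
  constructor
  · rintro ⟨a, ⟨ha, rfl⟩, rfl⟩
    simpa using ha
  · rintro ⟨hx, hA⟩
    exact ⟨update x i b, ⟨hA, by simp⟩, by simp [← hx]⟩

lemma mem_fiber_self {z : U → Bool} (hz : z ∈ A) : update z i false ∈ fiber A i (z i) :=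
  mem_fiber.2 ⟨by simp, by rwa [update_idem, update_eq_self]⟩

lemma card_fiber_false_add_card_fiber_true (A : Finset (U → Bool)) (i : U) :
    #(fiber A i false) + #(fiber A i true) = #A := by
  have hinj (b : Bool) : #(fiber A i b) = #{a ∈ A | a i = b} := by
    refine card_image_of_injOn fun a ha a' ha' h => funext fun j => ?_
    by_cases hj : j = i
    · subst hj
      rw [(mem_filter.1 ha).2, (mem_filter.1 ha').2]
    · simpa [hj] using congrFun h j
  rw [hinj, hinj, ← card_filter_add_card_filter_not (s := A) (fun a => a i = false)]
  simp

lemma StronglyShatters.exists_fiber (h : StronglyShatters (A : Set (U → Bool)) X)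
    (hi : i ∉ X) : ∃ b, StronglyShatters (fiber A i b : Set (U → Bool)) X := by
  obtain ⟨a, ha⟩ := stronglyShatters_iff_piecewise.1 h
  refine ⟨a i, stronglyShatters_iff_piecewise.2
    ⟨update a i false, fun g => mem_fiber.2 ⟨by simp [hi], ?_⟩⟩⟩
  rw [X.update_piecewise_of_notMem _ _ hi, update_idem, update_eq_self]
  exact ha g

lemma StronglyShatters.fiber_inter (h : StronglyShatters (A : Set (U → Bool)) X)
    (hi : i ∈ X) :
    StronglyShatters (↑(fiber A i false ∩ fiber A i true) : Set (U → Bool)) (X.erase i) := by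
  obtain ⟨a, ha⟩ := stronglyShatters_iff_piecewise.1 h
  refine stronglyShatters_iff_piecewise.2 ⟨update a i false, fun g => ?_⟩
  have hmem (b : Bool) : (X.erase i).piecewise g (update a i false) ∈ fiber A i b := by
    refine mem_fiber.2 ⟨by simp, ?_⟩
    rw [(X.erase i).update_piecewise_of_notMem _ _ (notMem_erase i X), update_idem]
    have hpw : (X.erase i).piecewise g (update a i b) = X.piecewise (update g i b) a := by
      funext j
      by_cases hj : j = i
      · subst hj; simp [hi]
      · by_cases hjX : j ∈ X <;> simp [hj, hjX, Finset.piecewise]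
    rw [hpw]
    exact ha _
  exact mem_inter.2 ⟨hmem false, hmem true⟩

theorem card_stronglyShattered_le_fibers (A : Finset (U → Bool)) (i : U) :
    #(stronglyShattered A) ≤
      #(stronglyShattered (fiber A i false) ∪ stronglyShattered (fiber A i true)) +
        #(stronglyShattered (fiber A i false ∩ fiber A i true)) := by
  rw [← card_filter_add_card_filter_not (s := stronglyShattered A) (fun X => i ∉ X)]
  refine add_le_add (card_le_card fun X hX => ?_) ?_
  · obtain ⟨hX, hi⟩ := mem_filter.1 hX
    obtain ⟨b, hb⟩ := (mem_stronglyShattered.1 hX).exists_fiber hi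
    cases b
    · exact mem_union_left _ (mem_stronglyShattered.2 hb)
    · exact mem_union_right _ (mem_stronglyShattered.2 hb)
  · refine card_le_card_of_injOn (Finset.erase · i) (fun X hX => ?_) fun X hX Y hY h => ?_
    · obtain ⟨hX, hi⟩ := mem_filter.1 hX
      exact mem_stronglyShattered.2 ((mem_stronglyShattered.1 hX).fiber_inter (not_not.1 hi))
    · rw [← insert_erase (not_not.1 (mem_filter.1 hX).2),
        ← insert_erase (not_not.1 (mem_filter.1 hY).2)]
      exact congrArg (insert i) h

def fiberHom (A : Finset (U → Bool)) (i : U) (b : Bool) :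
    (cubeGraph U).induce (fiber A i b : Set (U → Bool)) →g
      (cubeGraph U).induce (A : Set (U → Bool)) where
  toFun x := ⟨update x.1 i b, (mem_fiber.1 x.2).2⟩
  map_rel' {x y} h := by
    change hDist (update x.1 i b) (update y.1 i b) = 1
    rw [hDist_update_update (((mem_fiber.1 x.2).1).trans (mem_fiber.1 y.2).1.symm)]
    exact h

end Fibers

section Connectivity
variable [Fintype U] [DecidableEq U] {A : Finset (U → Bool)} {i : U}

open Function SimpleGraph

lemma stronglyShatters_empty {A : Set (U → Bool)} (h : A.Nonempty) : StronglyShatters A ∅ :=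
  let ⟨a, ha⟩ := h
  ⟨a, fun _ => by simpa using ha⟩

lemma card_fiber_le_card_stronglyShattered (hA : #A ≤ #(stronglyShattered A)) (b : Bool) :
    #(fiber A i b) ≤ #(stronglyShattered (fiber A i b)) := by
  have := card_fiber_false_add_card_fiber_true A i
  have := card_stronglyShattered_le_fibers A i
  have := card_stronglyShattered_le (fiber A i false)
  have := card_stronglyShattered_le (fiber A i true)
  have := card_union_add_card_inter (stronglyShattered (fiber A i false))
    (stronglyShattered (fiber A i true))
  have := card_le_card <| subset_inter
    (stronglyShattered_mono (inter_subset_left (s₂ := fiber A i true)))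
    (stronglyShattered_mono (inter_subset_right (s₁ := fiber A i false)))
  cases b <;> omega

/-- Otherwise `∅`, strongly shattered by both fibers, would be counted twice. -/
lemma fiber_inter_nonempty (hA : #A ≤ #(stronglyShattered A))
    (hne : ∀ b, (fiber A i b).Nonempty) : (fiber A i false ∩ fiber A i true).Nonempty := by
  by_contra! hempty
  have hboth : ∅ ∈ stronglyShattered (fiber A i false) ∩ stronglyShattered (fiber A i true) :=
    mem_inter.2 ⟨mem_stronglyShattered.2 (stronglyShatters_empty (coe_nonempty.2 (hne false))),
      mem_stronglyShattered.2 (stronglyShatters_empty (coe_nonempty.2 (hne true)))⟩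
  have := card_pos.2 ⟨_, hboth⟩
  have := card_fiber_false_add_card_fiber_true A i
  have := card_stronglyShattered_le_fibers A i
  have := card_stronglyShattered_le (fiber A i false)
  have := card_stronglyShattered_le (fiber A i true)
  have := card_union_add_card_inter (stronglyShattered (fiber A i false))
    (stronglyShattered (fiber A i true))
  have := (card_stronglyShattered_le (fiber A i false ∩ fiber A i true)).trans_eq
    (by rw [hempty, card_empty])
  omega

/-- By induction, every vertex `z` is joined to `update c i (z i)` inside its own fiber, where
`c` is a vertex common to both fibers; the two points `update c i b` are adjacent. -/
theorem preconnected_of_card_le_card_stronglyShattered (A : Finset (U → Bool))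
    (hA : #A ≤ #(stronglyShattered A)) :
    ((cubeGraph U).induce (A : Set (U → Bool))).Preconnected := by
  induction hn : #A using Nat.strong_induction_on generalizing A with
  | _ n ih =>
  intro x y
  obtain rfl | hxy := eq_or_ne x y
  · rfl
  obtain ⟨i, hi⟩ := Function.ne_iff.1 (Subtype.coe_injective.ne hxy)
  have hne (b : Bool) : (fiber A i b).Nonempty := by
    obtain hb | hb : x.1 i = b ∨ y.1 i = b := by
      revert hi; cases x.1 i <;> cases y.1 i <;> cases b <;> simp
    · exact ⟨_, hb ▸ mem_fiber_self x.2⟩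
    · exact ⟨_, hb ▸ mem_fiber_self y.2⟩
  have hsmall (b : Bool) : #(fiber A i b) < n := by
    have := card_fiber_false_add_card_fiber_true A i
    have := (hne (!b)).card_pos
    cases b <;> simp only [Bool.not_false, Bool.not_true] at this <;> omega
  obtain ⟨c, hc⟩ := fiber_inter_nonempty hA hne
  have hcb (b : Bool) : c ∈ fiber A i b := by
    cases b
    exacts [(mem_inter.1 hc).1, (mem_inter.1 hc).2]
  have hcA (b : Bool) : update c i b ∈ (A : Set (U → Bool)) := (mem_fiber.1 (hcb b)).2
  have hreach (z : (A : Set (U → Bool))) :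
      ((cubeGraph U).induce (A : Set (U → Bool))).Reachable z ⟨_, hcA (z.1 i)⟩ := by
    have h := ih _ (hsmall (z.1 i)) _ (card_fiber_le_card_stronglyShattered hA _) rfl
      ⟨_, mem_fiber_self z.2⟩ ⟨c, hcb _⟩
    convert h.map (fiberHom A i (z.1 i)) using 1
    · exact Subtype.ext (by simp [fiberHom])
    · rfl
  have hadj : ((cubeGraph U).induce (A : Set (U → Bool))).Adj
      ⟨_, hcA false⟩ ⟨_, hcA true⟩ := by
    change hDist _ _ = 1
    simpa using hDist_update_of_ne (x := update c i false) (i := i) (b := true) (by simp)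
  refine (hreach x).trans (Reachable.trans ?_ (hreach y).symm)
  cases x.1 i <;> cases y.1 i
  exacts [Reachable.refl _, hadj.reachable, hadj.symm.reachable, Reachable.refl _]

theorem IsAmple.preconnected {A : Set (U → Bool)} (hA : IsAmple A) :
    ((cubeGraph U).induce A).Preconnected := by
  have h := preconnected_of_card_le_card_stronglyShattered A.toFinset
    (IsAmple.card_le_card_stronglyShattered (by rwa [Set.coe_toFinset]))
  rwa [Set.coe_toFinset] at h

end Connectivity

section Amalgam
variable [Fintype U] [DecidableEq U]

theorem shatters_or_shatters_of_isAmple_inter {G1 G2 : Set (U → Bool)}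
    (hbetween : ∀ a ∈ G1, ∀ b ∈ G2, ∃ w ∈ G1 ∩ G2, ∀ j, a j = b j → w j = a j)
    (h0 : IsAmple (G1 ∩ G2)) {X : Finset U} (hX : Shatters (G1 ∪ G2) X) :
    Shatters G1 X ∨ Shatters G2 X := by
  simp only [shatters_iff_image_restrict, Set.image_union, Set.eq_univ_iff_forall] at hX ⊢
  by_contra! hno
  obtain ⟨⟨p, hp⟩, ⟨q, hq⟩⟩ := hno
  set T := X.restrict (π := fun _ => Bool)
  have hpF : p ∉ T '' (G1 ∩ G2) := fun h => hp (Set.image_mono Set.inter_subset_left h)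
  have hqF : q ∉ T '' (G1 ∩ G2) := fun h => hq (Set.image_mono Set.inter_subset_right h)
  obtain ⟨walk⟩ := (h0.image_restrict X).compl.preconnected ⟨p, hpF⟩ ⟨q, hqF⟩
  obtain ⟨d, -, hu1, hv1⟩ := walk.exists_boundary_dart {r | r.1 ∉ T '' G1} hp
    (by simpa using (hX q).resolve_right hq)
  simp only [Set.mem_ofPred_eq, not_not] at hu1 hv1
  obtain ⟨a, ha, hau⟩ := (hX d.fst).resolve_left hu1
  obtain ⟨b, hb, hbv⟩ := hv1
  obtain ⟨w, hw, hwb⟩ := hbetween b hb a ha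
  have hvu : hDist d.snd.1 d.fst.1 = 1 := by
    rw [hDist_eq_hammingDist, hammingDist_comm]
    exact d.adj
  have hwT (j : X) (hj : d.snd.1 j = d.fst.1 j) : T w j = d.snd.1 j := by
    rw [← hbv, ← hau] at hj
    rw [← hbv]
    exact hwb j hj
  rcases eq_or_eq_of_hDist_eq_one hvu hwT with h | h
  · exact d.snd.2 (h ▸ ⟨w, hw, rfl⟩)
  · exact d.fst.2 (h ▸ ⟨w, hw, rfl⟩)

end Amalgam

theorem stmt17_general [Fintype U] [DecidableEq U] (G G1 G2 : Set (U → Bool))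
    (hG : IsPartialCube G)
    (hu : G1 ∪ G2 = G)
    (hedge : ∀ x ∈ G, ∀ y ∈ G, hDist x y = 1 → (x ∈ G1 ∧ y ∈ G1) ∨ (x ∈ G2 ∧ y ∈ G2))
    (ha1 : IsAmple G1)
    (ha2 : IsAmple G2)
    (ha0 : IsAmple (G1 ∩ G2)) :
    IsAmple G := by
  subst hu
  intro X hX
  rcases shatters_or_shatters_of_isAmple_inter
    (fun _ ha _ hb => hG.exists_mem_inter_between hedge ha hb) ha0 hX with h | h
  · exact (ha1 X h).mono Set.subset_union_left
  · exact (ha2 X h).mono Set.subset_union_right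

/-- If a partial cube `G` (an isometric subgraph of the hypercube) is an
AMP-amalgam of two ample partial cubes `G1` and `G2` (they cover all vertices and edges of
`G`, and `G0 = G1 ∩ G2` is a nonempty ample partial cube different from `G1` and `G2`),
then `G` is ample. -/
theorem stmt17 [Fintype U] [DecidableEq U] (G G1 G2 : Set (U → Bool))
    (hG : IsPartialCube G)
    (h1 : G1 ⊆ G) (h2 : G2 ⊆ G) (hu : G1 ∪ G2 = G)
    (hne : (G1 ∩ G2).Nonempty) (hp1 : G1 ∩ G2 ≠ G1) (hp2 : G1 ∩ G2 ≠ G2)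
    (hedge : ∀ x ∈ G, ∀ y ∈ G, hDist x y = 1 → (x ∈ G1 ∧ y ∈ G1) ∨ (x ∈ G2 ∧ y ∈ G2))
    (hpc1 : IsPartialCube G1) (ha1 : IsAmple G1)
    (hpc2 : IsPartialCube G2) (ha2 : IsAmple G2)
    (hpc0 : IsPartialCube (G1 ∩ G2)) (ha0 : IsAmple (G1 ∩ G2)) :
    IsAmple G :=
  stmt17_general G G1 G2 hG hu hedge ha1 ha2 ha0
end

section
/- A peripheral expansion of an ample partial cube G with respect to an ample subgraph H of G is again an ample partial cube. -/
open Finset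
open scoped Classical

variable {U : Type*}

/-- Extend a vertex of the cube on `U` to a vertex of the cube on `Option U`, using `b` as
the value of the new coordinate `none`. -/
def ext0 (f : U → Bool) (b : Bool) : Option U → Bool := fun o => o.elim b f

/-!
The expansion consists of a bottom copy of `G` and a top copy of `H`, joined by the matching
`(f, 0) ~ (f, 1)`. Inside either copy, geodesics of `G` resp. `H` lift to geodesics. From
`(f, 0)` to `(g, 1)` one follows a geodesic of `G` from `f` to `g` and then the matching edge,
which uses the new coordinate exactly once; hence the expansion is isometric.

If the expansion shatters `X`, then `G` shatters the old coordinates of `X`, and if `X`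
contains the new coordinate, the fibre over `1`, i.e. `H`, does. A full subcube of `G`
(resp. of `H`, stacked over both values of the new coordinate since `H ⊆ G`) is then a full
subcube of the expansion over `X`.
-/

section Cube

variable [Fintype U] [DecidableEq U]

lemma hDist_self (x : U → Bool) : hDist x x = 0 := by simp [hDist]

lemma hDist_comm (x y : U → Bool) : hDist x y = hDist y x := by
  simp only [hDist, ne_comm]

lemma hDist_triangle (x y z : U → Bool) : hDist x z ≤ hDist x y + hDist y z := by
  refine (card_le_card fun i hi => ?_).trans (card_union_le _ _)
  simp only [mem_filter, mem_union, mem_univ, true_and] at hi ⊢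
  by_contra! h
  exact hi (h.1.trans h.2)

lemma hDist_ext0_ext0 (f g : U → Bool) (b : Bool) :
    hDist (ext0 f b) (ext0 g b) = hDist f g := by
  have : univ.filter (fun o => ext0 f b o ≠ ext0 g b o) = (univ.filter fun i => f i ≠ g i).map
      Function.Embedding.some := by
    ext (_ | i) <;> simp only [mem_filter, mem_univ, true_and, mem_map] <;> simp [ext0]
  rw [hDist, this, card_map, hDist]

lemma hDist_ext0_false_true (f g : U → Bool) :
    hDist (ext0 f false) (ext0 g true) = hDist f g + 1 := by
  have : univ.filter (fun o => ext0 f false o ≠ ext0 g true o) =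
      insert none ((univ.filter fun i => f i ≠ g i).map Function.Embedding.some) := by
    ext (_ | i) <;> simp only [mem_filter, mem_univ, true_and, mem_insert, mem_map] <;>
      simp [ext0]
  rw [hDist, this, card_insert_of_notMem (by simp), card_map, hDist]

section PartialCube

variable {A : Set (U → Bool)}

lemma hDist_le_length_s18 {x y : A} (w : ((cubeGraph U).induce A).Walk x y) :
    hDist x.1 y.1 ≤ w.length := by
  induction w with
  | nil => simp [hDist_self]
  | @cons u v w hadj _ ih =>
    have huv : hDist u.1 v.1 = 1 := hadj
    rw [SimpleGraph.Walk.length_cons]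
    linarith [hDist_triangle u.1 v.1 w.1]

lemma IsPartialCube.exists_walk (hA : IsPartialCube A) (x y : A) :
    ∃ w : ((cubeGraph U).induce A).Walk x y, w.length = hDist x.1 y.1 := by
  obtain ⟨w, hw⟩ := (hA.1.preconnected x y).exists_walk_length_eq_dist
  have hdist := hA.2 x.1 x.2 y.1 y.2
  rw [dIn, dif_pos ⟨x.2, y.2⟩] at hdist
  exact ⟨w, hw.trans hdist⟩

lemma isPartialCube_of_exists_walk (hne : A.Nonempty)
    (h : ∀ x y : A, ∃ w : ((cubeGraph U).induce A).Walk x y, w.length ≤ hDist x.1 y.1) :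
    IsPartialCube A := by
  have : Nonempty A := hne.to_subtype
  refine ⟨⟨fun x y => (h x y).choose.reachable⟩, fun x hx y hy => ?_⟩
  obtain ⟨w, hw⟩ := h ⟨x, hx⟩ ⟨y, hy⟩
  obtain ⟨w', hw'⟩ := w.reachable.exists_walk_length_eq_dist
  rw [dIn, dif_pos ⟨hx, hy⟩]
  exact le_antisymm ((SimpleGraph.dist_le w).trans hw) (hw' ▸ hDist_le_length_s18 w')

end PartialCube

def ext0Hom {A : Set (U → Bool)} {B : Set (Option U → Bool)} {b : Bool}
    (hAB : Set.MapsTo (ext0 · b) A B) :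
    (cubeGraph U).induce A →g (cubeGraph (Option U)).induce B where
  toFun := hAB.restrict
  map_rel' {f g} hfg := (hDist_ext0_ext0 f.1 g.1 b).trans hfg

lemma exists_walk_ext0Hom {A : Set (U → Bool)} {B : Set (Option U → Bool)} {b : Bool}
    (hA : IsPartialCube A) (hAB : Set.MapsTo (ext0 · b) A B) (x y : A) :
    ∃ w : ((cubeGraph (Option U)).induce B).Walk (ext0Hom hAB x) (ext0Hom hAB y),
      w.length = hDist x.1 y.1 := by
  obtain ⟨w, hw⟩ := hA.exists_walk x y
  exact ⟨w.map (ext0Hom hAB), (SimpleGraph.Walk.length_map _ _).trans hw⟩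

end Cube

def periphExp (G H : Set (U → Bool)) : Set (Option U → Bool) :=
  (fun f => ext0 f false) '' G ∪ (fun f => ext0 f true) '' H

section PeripheralExpansion

variable {G H : Set (U → Bool)}

lemma mapsTo_ext0_false_periphExp : Set.MapsTo (ext0 · false) G (periphExp G H) :=
  fun _ hf => Or.inl ⟨_, hf, rfl⟩

lemma mapsTo_ext0_true_periphExp : Set.MapsTo (ext0 · true) H (periphExp G H) :=
  fun _ hf => Or.inr ⟨_, hf, rfl⟩

lemma ext0_piecewise [DecidableEq U] (X : Finset (Option U)) (g : Option U → Bool)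
    (a : U → Bool) (b : Bool) :
    (fun o => if o ∈ X then g o else ext0 a b o) =
      ext0 (fun u => if u ∈ eraseNone X then g (some u) else a u)
        (if none ∈ X then g none else b) := by
  funext o
  cases o <;> simp [ext0]

variable [Fintype U] [DecidableEq U]

lemma exists_walk_periphExp_of_bottom (hHG : H ⊆ G) (hG : IsPartialCube G) (x : G)
    (y : periphExp G H) :
    ∃ w : ((cubeGraph (Option U)).induce (periphExp G H)).Walk
      (ext0Hom mapsTo_ext0_false_periphExp x) y, w.length ≤ hDist (ext0 x.1 false) y.1 := by
  obtain ⟨_, ⟨g, hg, rfl⟩ | ⟨g, hg, rfl⟩⟩ := y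
  · obtain ⟨w, hw⟩ := exists_walk_ext0Hom hG mapsTo_ext0_false_periphExp x ⟨g, hg⟩
    exact ⟨w, (hw.trans (hDist_ext0_ext0 _ _ _).symm).le⟩
  · obtain ⟨w, hw⟩ := exists_walk_ext0Hom hG mapsTo_ext0_false_periphExp x ⟨g, hHG hg⟩
    have hmatch : ((cubeGraph (Option U)).induce (periphExp G H)).Adj
        (ext0Hom mapsTo_ext0_false_periphExp ⟨g, hHG hg⟩)
        ⟨ext0 g true, mapsTo_ext0_true_periphExp hg⟩ :=
      (hDist_ext0_false_true g g).trans (by rw [hDist_self])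
    refine ⟨w.concat hmatch, ?_⟩
    rw [SimpleGraph.Walk.length_concat, hw, hDist_ext0_false_true]

lemma isPartialCube_periphExp (hHG : H ⊆ G) (hG : IsPartialCube G) (hH : IsPartialCube H) :
    IsPartialCube (periphExp G H) := by
  obtain ⟨⟨f₀, hf₀⟩⟩ := hG.1.nonempty
  refine isPartialCube_of_exists_walk ⟨_, mapsTo_ext0_false_periphExp hf₀⟩ ?_
  rintro ⟨_, ⟨f, hf, rfl⟩ | ⟨f, hf, rfl⟩⟩ y
  · exact exists_walk_periphExp_of_bottom hHG hG ⟨f, hf⟩ y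
  obtain ⟨_, ⟨g, hg, rfl⟩ | ⟨g, hg, rfl⟩⟩ := y
  · obtain ⟨w, hw⟩ := exists_walk_periphExp_of_bottom hHG hG ⟨g, hg⟩
      ⟨ext0 f true, mapsTo_ext0_true_periphExp hf⟩
    exact ⟨w.reverse, w.length_reverse.trans_le ((hDist_comm _ _).trans_ge hw)⟩
  · obtain ⟨w, hw⟩ := exists_walk_ext0Hom hH mapsTo_ext0_true_periphExp ⟨f, hf⟩ ⟨g, hg⟩
    exact ⟨w, (hw.trans (hDist_ext0_ext0 _ _ _).symm).le⟩

lemma Shatters.eraseNone_of_periphExp (hHG : H ⊆ G) {X : Finset (Option U)}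
    (hX : Shatters (periphExp G H) X) : Shatters G (eraseNone X) := by
  intro g
  obtain ⟨_, ⟨f, hf, rfl⟩ | ⟨f, hf, rfl⟩, hfg⟩ := hX (ext0 g false)
  · exact ⟨f, hf, fun u hu => hfg (some u) (mem_eraseNone.1 hu)⟩
  · exact ⟨f, hHG hf, fun u hu => hfg (some u) (mem_eraseNone.1 hu)⟩

lemma Shatters.eraseNone_of_periphExp_of_none_mem {X : Finset (Option U)}
    (hX : Shatters (periphExp G H) X) (hnone : none ∈ X) : Shatters H (eraseNone X) := by
  intro g
  obtain ⟨_, ⟨f, -, rfl⟩ | ⟨f, hf, rfl⟩, hfg⟩ := hX (ext0 g true)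
  · exact absurd (hfg none hnone) (by simp [ext0])
  · exact ⟨f, hf, fun u hu => hfg (some u) (mem_eraseNone.1 hu)⟩

lemma isAmple_periphExp (hHG : H ⊆ G) (hG : IsAmple G) (hH : IsAmple H) :
    IsAmple (periphExp G H) := by
  intro X hX
  by_cases hnone : none ∈ X
  · obtain ⟨a, ha⟩ := hH _ (hX.eraseNone_of_periphExp_of_none_mem hnone)
    refine ⟨ext0 a false, fun g => ?_⟩
    rw [ext0_piecewise, if_pos hnone]
    cases g none
    · exact mapsTo_ext0_false_periphExp (hHG (ha _))
    · exact mapsTo_ext0_true_periphExp (ha _)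
  · obtain ⟨a, ha⟩ := hG _ (hX.eraseNone_of_periphExp hHG)
    refine ⟨ext0 a false, fun g => ?_⟩
    rw [ext0_piecewise, if_neg hnone]
    exact mapsTo_ext0_false_periphExp (ha _)

end PeripheralExpansion

/-- A peripheral expansion of an ample partial cube `G` with respect to an
ample (isometric) subgraph `H ⊆ G` is again an ample partial cube. -/
theorem stmt18 [Fintype U] [DecidableEq U] (G H : Set (U → Bool))
    (hGpc : IsPartialCube G) (hGa : IsAmple G)
    (hHG : H ⊆ G) (hHpc : IsPartialCube H) (hHa : IsAmple H) :
    IsPartialCube ((fun f => ext0 f false) '' G ∪ (fun f => ext0 f true) '' H) ∧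
    IsAmple ((fun f => ext0 f false) '' G ∪ (fun f => ext0 f true) '' H) :=
  ⟨isPartialCube_periphExp hHG hGpc hHpc, isAmple_periphExp hHG hGa hHa⟩
end
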